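/- Let (Sₜ) be a semigroup on a metric space H with global attractor A. Every point x ∈ A lies on a bounded full trajectory contained in A; that is, there exists γ : ℝ → H with γ(0) = x, Sₜγ(s) = γ(t+s) for t ≥ 0, s ∈ ℝ, and γ(ℝ) ⊆ A. -/

import Mathlib

/-!
Since `S 1` maps `A` onto `A`, one can choose preimages in `A` step by step and obtain a backward
orbit `x = g 0, g 1, g 2, …` in `A` with `S 1 (g (n + 1)) = g n`. The semigroup law then makes
`S (s + n) (g n)` independent of `n` as soon as `s + n ≥ 0`, and this common value is the full
trajectory at time `s`; it lies in `A` because `A` is forward invariant.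
-/

open Metric

theorem Set.exists_backward_orbit {α : Type*} (f : α → α) {s : Set α} (hs : s ⊆ f '' s)
    {x : α} (hx : x ∈ s) :
    ∃ g : ℕ → α, g 0 = x ∧ (∀ n, g n ∈ s) ∧ ∀ n, f (g (n + 1)) = g n := by
  have hpre : ∀ a : s, ∃ b : s, f b = a := fun a => by
    obtain ⟨b, hb, hba⟩ := hs a.2
    exact ⟨⟨b, hb⟩, hba⟩
  choose F hF using hpre
  refine ⟨fun n => (F^[n] ⟨x, hx⟩ : s), rfl, fun n => (F^[n] ⟨x, hx⟩).2, fun n => ?_⟩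
  simp only [Function.iterate_succ_apply', hF]

theorem add_natCeil_neg_nonneg (s : ℝ) : 0 ≤ s + ⌈-s⌉₊ := by
  linarith [Nat.le_ceil (-s)]

namespace Semiflow

variable {H : Type*} (S : ℝ → H → H)

noncomputable def trajectoryOfBackwardOrbit (g : ℕ → H) (s : ℝ) : H :=
  S (s + ⌈-s⌉₊) (g ⌈-s⌉₊)

variable {S} (hS0 : ∀ y, S 0 y = y)
  (hSadd : ∀ t ≥ (0:ℝ), ∀ s ≥ (0:ℝ), ∀ y, S (t + s) y = S t (S s y))
  {g : ℕ → H} (hg : ∀ n, S 1 (g (n + 1)) = g n)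

include hS0 hSadd hg in
theorem natCast_apply_backward_orbit (n k : ℕ) : S k (g (n + k)) = g n := by
  induction k with
  | zero => simpa using hS0 (g n)
  | succ k ih =>
    rw [Nat.cast_succ, hSadd k k.cast_nonneg 1 zero_le_one, ← Nat.add_assoc, hg, ih]

include hS0 hSadd hg in
theorem apply_backward_orbit_eq_of_le {s : ℝ} {n m : ℕ} (hnm : n ≤ m) (hsn : 0 ≤ s + n) :
    S (s + m) (g m) = S (s + n) (g n) := by
  obtain ⟨k, rfl⟩ := Nat.exists_eq_add_of_le hnm
  rw [Nat.cast_add, ← add_assoc, hSadd (s + n) hsn k k.cast_nonneg,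
    natCast_apply_backward_orbit hS0 hSadd hg]

include hS0 hSadd hg in
theorem trajectoryOfBackwardOrbit_eq {s : ℝ} {n : ℕ} (hsn : 0 ≤ s + n) :
    trajectoryOfBackwardOrbit S g s = S (s + n) (g n) := by
  rw [trajectoryOfBackwardOrbit,
    ← apply_backward_orbit_eq_of_le hS0 hSadd hg (le_max_right n _) (add_natCeil_neg_nonneg s),
    apply_backward_orbit_eq_of_le hS0 hSadd hg (le_max_left _ _) hsn]

include hS0 in
theorem trajectoryOfBackwardOrbit_zero : trajectoryOfBackwardOrbit S g 0 = g 0 := by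
  simp [trajectoryOfBackwardOrbit, hS0]

include hS0 hSadd hg in
theorem apply_trajectoryOfBackwardOrbit {t : ℝ} (ht : 0 ≤ t) (s : ℝ) :
    S t (trajectoryOfBackwardOrbit S g s) = trajectoryOfBackwardOrbit S g (t + s) := by
  have hs := add_natCeil_neg_nonneg s
  rw [trajectoryOfBackwardOrbit, ← hSadd t ht _ hs, ← add_assoc,
    trajectoryOfBackwardOrbit_eq hS0 hSadd hg (by linarith)]

theorem range_trajectoryOfBackwardOrbit_subset {A : Set H}
    (hA : ∀ t ≥ (0:ℝ), S t '' A ⊆ A) (hgA : ∀ n, g n ∈ A) :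
    Set.range (trajectoryOfBackwardOrbit S g) ⊆ A := by
  rintro _ ⟨s, rfl⟩
  exact hA _ (add_natCeil_neg_nonneg s) ⟨_, hgA _, rfl⟩

end Semiflow

open Semiflow in
theorem attractor_point_on_full_trajectory_general
    {H : Type*}
    (S : ℝ → H → H)
    (hS0 : ∀ y, S 0 y = y)
    (hSadd : ∀ t ≥ (0:ℝ), ∀ s ≥ (0:ℝ), ∀ y, S (t + s) y = S t (S s y))
    (A : Set H)
    (hAinv : ∀ t ≥ (0:ℝ), S t '' A = A)
    (x : H) (hx : x ∈ A) :
    ∃ γ : ℝ → H, γ 0 = x ∧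
      (∀ t ≥ (0:ℝ), ∀ s : ℝ, S t (γ s) = γ (t + s)) ∧
      Set.range γ ⊆ A := by
  obtain ⟨g, hg0, hgA, hg⟩ := Set.exists_backward_orbit (S 1) (hAinv 1 zero_le_one).ge hx
  refine ⟨trajectoryOfBackwardOrbit S g, ?_, fun t ht s => ?_, ?_⟩
  · rw [trajectoryOfBackwardOrbit_zero hS0, hg0]
  · exact apply_trajectoryOfBackwardOrbit hS0 hSadd hg ht s
  · exact range_trajectoryOfBackwardOrbit_subset (fun t ht => (hAinv t ht).le) hgA

/-- Every point of the global attractor lies on a bounded full trajectory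
contained in the attractor. -/
theorem attractor_point_on_full_trajectory
    {H : Type*} [MetricSpace H]
    (S : ℝ → H → H)
    (hcont : ∀ t ≥ (0:ℝ), Continuous (S t))
    (hS0 : ∀ y, S 0 y = y)
    (hSadd : ∀ t ≥ (0:ℝ), ∀ s ≥ (0:ℝ), ∀ y, S (t + s) y = S t (S s y))
    (A : Set H)
    (hAc : IsCompact A)
    (hAinv : ∀ t ≥ (0:ℝ), S t '' A = A)
    (hAattr : ∀ B : Set H, Bornology.IsBounded B → ∀ ε > (0:ℝ),
      ∃ T : ℝ, ∀ t ≥ T, ∀ y ∈ B, infDist (S t y) A ≤ ε)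
    (x : H) (hx : x ∈ A) :
    ∃ γ : ℝ → H, γ 0 = x ∧
      (∀ t ≥ (0:ℝ), ∀ s : ℝ, S t (γ s) = γ (t + s)) ∧
      Set.range γ ⊆ A :=
  attractor_point_on_full_trajectory_general S hS0 hSadd A hAinv x hx
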